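/- Every 101-avoiding ascent sequence is a restricted growth function. -/

import Mathlib

def ascents (l : List ℕ) : ℕ :=
  ((l.zip l.tail).filter (fun p => p.1 < p.2)).length

def IsAscSeq (l : List ℕ) : Prop :=
  l.getD 0 0 = 0 ∧
  ∀ k, k < l.length → 0 < k → l.getD k 0 ≤ ascents (l.take k) + 1

def IsRGF (l : List ℕ) : Prop :=
  l.getD 0 0 = 0 ∧
  ∀ k, k < l.length → ∀ j, l.getD k 0 = j + 1 → ∃ i, i < k ∧ l.getD i 0 = j

def SelfModified (l : List ℕ) : Prop :=
  IsAscSeq l ∧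
  ∀ k, k < l.length → 0 < k →
    l.getD k 0 ≤ l.getD (k - 1) 0 ∨ l.getD k 0 = ascents (l.take k) + 1

def Contains101 (l : List ℕ) : Prop :=
  ∃ i j k, i < j ∧ j < k ∧ k < l.length ∧
    l.getD i 0 = l.getD k 0 ∧ l.getD j 0 < l.getD k 0

def Contains0101 (l : List ℕ) : Prop :=
  ∃ i j k m, i < j ∧ j < k ∧ k < m ∧ m < l.length ∧
    l.getD i 0 = l.getD k 0 ∧ l.getD j 0 = l.getD m 0 ∧ l.getD i 0 < l.getD j 0

def Contains1010 (l : List ℕ) : Prop :=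
  ∃ i j k m, i < j ∧ j < k ∧ k < m ∧ m < l.length ∧
    l.getD i 0 = l.getD k 0 ∧ l.getD j 0 = l.getD m 0 ∧ l.getD j 0 < l.getD i 0

/-- The view of position `i` in the sequence `a`: the number of indices `j > i` such
that `a j` strictly exceeds all entries `a k` for `i ≤ k < j`.  This agrees with the
recursive definition `v i = v j + 1` for `j` the least index `> i` with `a j > a i`. -/
def view {α : Type*} [LinearOrder α] [Inhabited α] (a : List α) (i : ℕ) : ℕ :=
  ((List.range a.length).filter (fun j =>
    decide (i < j ∧ ∀ k, k < j → i ≤ k → a.getD k default < a.getD j default))).length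

/-- The panorama of `a`: the views of the positions of `a`, listed grouped by entry
value from largest value to smallest, positions within a group in increasing order. -/
def pan {α : Type*} [LinearOrder α] [Inhabited α] (a : List α) : List ℕ :=
  ((List.range a.length).mergeSort (fun i j =>
    decide (a.getD j default < a.getD i default ∨
      (a.getD i default = a.getD j default ∧ i ≤ j)))).map (view a)

/-- A square matrix of natural numbers, given by a dimension and an entry function
(indices are 0-based; entries with an index `≥ d` are irrelevant/zero). -/
structure FMat where
  d : ℕ
  entry : ℕ → ℕ → ℕ

/-- 0-based index of the first row whose rightmost entry is nonzero. -/
noncomputable def mindex (M : FMat) : ℕ :=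
  sInf {i | M.entry i (M.d - 1) ≠ 0}

/-- One step of the recursive bijection from ascent sequences to Fishburn matrices,
with cases AM1, AM2, AM3 (0-based indices). -/
noncomputable def fStep (M : FMat) (a : ℕ) : FMat :=
  if a ≤ mindex M then
    -- AM1: increase entry (a, d-1)
    ⟨M.d, fun i j => M.entry i j + if i = a ∧ j = M.d - 1 then 1 else 0⟩
  else if a = M.d then
    -- AM2: append a new row and column, with 1 in the new diagonal entry
    ⟨M.d + 1, fun i j =>
      if i = M.d ∨ j = M.d then (if i = M.d ∧ j = M.d then 1 else 0)
      else M.entry i j⟩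
  else
    -- AM3: insert a new row and column at index a
    ⟨M.d + 1, fun i j =>
      if i = a then (if j = M.d then 1 else 0)
      else if j = a then (if i < a then M.entry i (M.d - 1) else 0)
      else if j = M.d ∧ i < a then 0
      else M.entry (if i < a then i else i - 1) (if j < a then j else j - 1)⟩

/-- The map from ascent sequences to Fishburn matrices. -/
noncomputable def fAM (l : List ℕ) : FMat :=
  l.tail.foldl fStep ⟨1, fun i j => if i = 0 ∧ j = 0 then 1 else 0⟩

/-- Fishburn matrix: upper triangular (and supported on `[0,d) × [0,d)`),
with no zero row and no zero column. -/
def IsFishburn (M : FMat) : Prop :=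
  (∀ i j, (M.d ≤ i ∨ M.d ≤ j ∨ j < i) → M.entry i j = 0) ∧
  (∀ i, i < M.d → ∃ j, j < M.d ∧ M.entry i j ≠ 0) ∧
  (∀ j, j < M.d → ∃ i, i < M.d ∧ M.entry i j ≠ 0)

def entrySum (M : FMat) : ℕ :=
  ∑ i ∈ Finset.range M.d, ∑ j ∈ Finset.range M.d, M.entry i j

/-- Reflection of a matrix through its antidiagonal. -/
def reflect (M : FMat) : FMat :=
  ⟨M.d, fun i j => if i < M.d ∧ j < M.d then M.entry (M.d - 1 - j) (M.d - 1 - i) else 0⟩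

/-- The canonical sequence `(0^{m₀₀}, 1^{m₁₁}, 0^{m₀₁}, 2^{m₂₂}, 1^{m₁₂}, 0^{m₀₂}, …)`
(0-based indices) associated to a matrix; this is `f_MA(M)` for `M ∈ RMatrices`. -/
def canonSeq (M : FMat) : List ℕ :=
  (List.range M.d).flatMap (fun j =>
    (List.range (j + 1)).reverse.flatMap (fun i => List.replicate (M.entry i j) i))

/-- The dual canonical sequence
`(0^{m_{d-1,d-1}}, 1^{m_{d-2,d-2}}, 0^{m_{d-2,d-1}}, …, (d-1)^{m_{0,0}}, …, 0^{m_{0,d-1}})`,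
i.e. `f_MA` applied to the antidiagonal reflection of `M`. -/
def dualCanonSeq (M : FMat) : List ℕ :=
  (List.range M.d).flatMap (fun j =>
    (List.range (j + 1)).reverse.flatMap (fun i =>
      List.replicate (M.entry (M.d - 1 - j) (M.d - 1 - i)) i))

/-- A matrix is SE-free if it has no pair of nonzero entries `m i j`, `m i' j'`
with `i < i'`, `j < j'` and `i' ≤ j`. -/
def SEFree (M : FMat) : Prop :=
  ¬ ∃ i j i' j', i < i' ∧ j < j' ∧ i' ≤ j ∧ j' < M.d ∧
    M.entry i j ≠ 0 ∧ M.entry i' j' ≠ 0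

/-- Generalized ballot sequence (Yamanouchi word): in every prefix, each value `j+1`
occurs at most as often as `j`. -/
def IsBallot (l : List ℕ) : Prop :=
  ∀ k j, (l.take k).count (j + 1) ≤ (l.take k).count j

/-!
By induction on `k ≥ 1`, the values of the first `k` entries of a 101-avoiding ascent sequence
are exactly `0, …, m` for some `m` bounding the number of ascents among them. At an ascent the
new entry cannot repeat an earlier value (with the entry just before it, that would be a 101),
and the ascent-sequence bound `≤ ascents + 1 ≤ m + 1` then forces it to be `m + 1`. Hence every
entry `j + 1` is at most `m + 1` for its prefix, so `j` occurs before it.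
-/

lemma ascents_cons_cons (x y : ℕ) (t : List ℕ) :
    ascents (x :: y :: t) = ascents (y :: t) + if x < y then 1 else 0 := by
  simp only [ascents, List.tail_cons, List.zip_cons_cons, List.filter_cons]
  split <;> simp_all

lemma ascents_append_singleton : ∀ (l : List ℕ) (hl : l ≠ []) (x : ℕ),
    ascents (l ++ [x]) = ascents l + if l.getLast hl < x then 1 else 0
  | [a], _, x => by by_cases hax : a < x <;> simp [ascents, hax]
  | a :: b :: t, _, x => by
    rw [List.cons_append, List.cons_append, ascents_cons_cons, ← List.cons_append,
      ascents_append_singleton (b :: t) (List.cons_ne_nil _ _), ascents_cons_cons,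
      List.getLast_cons_cons]
    omega

lemma ascents_take_succ {l : List ℕ} {k : ℕ} (hk : 0 < k) (hkl : k < l.length) :
    ascents (l.take (k + 1)) =
      ascents (l.take k) + if l.getD (k - 1) 0 < l.getD k 0 then 1 else 0 := by
  have hne : l.take k ≠ [] := List.ne_nil_of_length_pos (by simp; omega)
  rw [List.take_add_one, List.getElem?_eq_getElem hkl, Option.toList_some,
    ascents_append_singleton _ hne, List.getLast_take, List.getElem?_eq_getElem (by omega),
    List.getD_eq_getElem _ _ hkl, List.getD_eq_getElem _ _ (by omega : k - 1 < l.length)]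
  rfl

lemma getD_ne_of_ascent {l : List ℕ} (h101 : ¬ Contains101 l) {i k : ℕ} (hi : i < k)
    (hkl : k < l.length) (hasc : l.getD (k - 1) 0 < l.getD k 0) :
    l.getD i 0 ≠ l.getD k 0 := by
  rintro heq
  obtain rfl | hi' := eq_or_lt_of_le (Nat.le_pred_of_lt hi)
  · exact hasc.ne heq
  · exact h101 ⟨i, k - 1, k, hi', by omega, hkl, heq, hasc⟩

lemma exists_values_take_eq_Iic {l : List ℕ} (h : IsAscSeq l) (h101 : ¬ Contains101 l) {k : ℕ}
    (hk : 0 < k) (hkl : k ≤ l.length) :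
    ∃ m, ascents (l.take k) ≤ m ∧ (∀ i < k, l.getD i 0 ≤ m) ∧
      ∀ v ≤ m, ∃ i < k, l.getD i 0 = v := by
  induction k, hk using Nat.le_induction with
  | base =>
    refine ⟨0, ?_, fun i hi => ?_, fun v hv => ⟨0, one_pos, ?_⟩⟩
    · obtain ⟨a, t, rfl⟩ := List.exists_cons_of_length_pos hkl
      simp [ascents]
    · rw [Nat.lt_one_iff.mp hi, h.1]
    · rw [h.1]; omega
  | succ k hk ih =>
    obtain ⟨m, hasc, hle, hsurj⟩ := ih (by omega)
    have hkl' : k < l.length := hkl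
    rw [ascents_take_succ hk hkl']
    split_ifs with hup
    · have hnew : l.getD k 0 = m + 1 := by
        have := h.2 k hkl' hk
        by_contra hne
        obtain ⟨i, hi, hiv⟩ := hsurj (l.getD k 0) (by omega)
        exact getD_ne_of_ascent h101 hi hkl' hup hiv
      refine ⟨m + 1, by omega, fun i hi => ?_, fun v hv => ?_⟩
      · obtain hi | rfl := Nat.lt_succ_iff_lt_or_eq.mp hi
        · exact (hle i hi).trans m.le_succ
        · exact hnew.le
      · obtain hv | rfl := Nat.lt_succ_iff_lt_or_eq.mp (Nat.lt_succ_of_le hv)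
        · obtain ⟨i, hi, hiv⟩ := hsurj v (by omega)
          exact ⟨i, hi.trans k.lt_succ_self, hiv⟩
        · exact ⟨k, k.lt_succ_self, hnew⟩
    · refine ⟨m, by omega, fun i hi => ?_, fun v hv => ?_⟩
      · obtain hi | rfl := Nat.lt_succ_iff_lt_or_eq.mp hi
        · exact hle i hi
        · exact (not_lt.mp hup).trans (hle _ (by omega))
      · obtain ⟨i, hi, hiv⟩ := hsurj v hv
        exact ⟨i, hi.trans k.lt_succ_self, hiv⟩

theorem avoids101_isRGF (l : List ℕ) (h : IsAscSeq l) (h101 : ¬ Contains101 l) :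
    IsRGF l := by
  refine ⟨h.1, fun k hkl j hj => ?_⟩
  have hk : 0 < k := Nat.pos_of_ne_zero (by rintro rfl; rw [h.1] at hj; omega)
  obtain ⟨m, hasc, -, hsurj⟩ := exists_values_take_eq_Iic h h101 hk hkl.le
  exact hsurj j (by have := h.2 k hkl hk; omega)
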